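/- Let I_j = [(2^j - 2)/2^j, (2^j - 1)/2^j) for j ≥ 1 and Ω = [0,1) ∪ ⋃_{j≥1} (I_j + 2j + 1). Then Ω multi-tiles ℝ at level 2 by translations on ℤ and is (2,1)-admissible for ℤ: for almost every ω ∈ [0,1), the two elements of Λ_ω are distinct modulo 2. -/
import Mathlib


open MeasureTheory

noncomputable section

/-- The interval `I_j = [(2^j - 2)/2^j, (2^j - 1)/2^j)`. -/
def Iset (j : ℕ) : Set ℝ := Set.Ico ((2 ^ j - 2) / 2 ^ j) ((2 ^ j - 1) / 2 ^ j)

/-- The set `Ω = [0,1) ∪ ⋃_{j ≥ 1} (I_j + 2j + 1)`. -/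
def Omeg : Set ℝ :=
  Set.Ico (0 : ℝ) 1 ∪ ⋃ j ∈ Set.Ici (1 : ℕ), (fun x => x + (2 * (j : ℝ) + 1)) '' Iset j

lemma mem_Iset_iff {j : ℕ} {ω : ℝ} :
    ω ∈ Iset j ↔ (2:ℝ)^j - 2 ≤ 2^j * ω ∧ 2^j * ω < 2^j - 1 := by
  have h : (0:ℝ) < 2^j := by positivity
  simp only [Iset, Set.mem_Ico, div_le_iff₀ h, lt_div_iff₀ h]
  constructor <;> rintro ⟨h1, h2⟩ <;> constructor <;> nlinarith

lemma Iset_subset {j : ℕ} (hj : 1 ≤ j) : Iset j ⊆ Set.Ico (0:ℝ) 1 := by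
  intro ω hω
  rw [mem_Iset_iff] at hω
  have h : (0:ℝ) < 2^j := by positivity
  have h2 : (2:ℝ) ≤ 2^j := by
    calc (2:ℝ) = 2^1 := by norm_num
    _ ≤ 2^j := by exact pow_le_pow_right₀ (by norm_num) hj
  constructor <;> nlinarith [hω.1, hω.2]

lemma exists_Iset {ω : ℝ} (hω : ω ∈ Set.Ico (0:ℝ) 1) :
    ∃ j : ℕ, 1 ≤ j ∧ ω ∈ Iset j := by
  set t := 1 - ω with ht
  have ht0 : 0 < t := by simp [ht]; linarith [hω.2]
  have ht1 : t ≤ 1 := by simp [ht]; linarith [hω.1]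
  have hex : ∃ n : ℕ, (1:ℝ) < 2^n * t := by
    obtain ⟨n, hn⟩ := pow_unbounded_of_one_lt (1/t) (one_lt_two (α := ℝ))
    exact ⟨n, by rw [div_lt_iff₀ ht0] at hn; linarith⟩
  classical
  set j := Nat.find hex with hj
  have hP : (1:ℝ) < 2^j * t := Nat.find_spec hex
  have hj1 : 1 ≤ j := by
    by_contra h
    have : j = 0 := by omega
    rw [this] at hP; simp at hP; linarith
  refine ⟨j, hj1, ?_⟩
  have hmin : ¬ (1:ℝ) < 2^(j-1) * t := Nat.find_min hex (by omega)
  push_neg at hmin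
  have h2 : (2:ℝ)^j = 2 * 2^(j-1) := by
    rw [← pow_succ']
    congr 1
    omega
  have e1 : (2:ℝ)^j * t = 2^j - 2^j * ω := by rw [ht]; ring
  have e2 : (2:ℝ)^j * t ≤ 2 := by rw [h2]; nlinarith [hmin]
  rw [mem_Iset_iff]
  constructor <;> linarith

lemma Iset_aux {j k : ℕ} {ω : ℝ} (h : j < k) (hjω : ω ∈ Iset j) (hkω : ω ∈ Iset k) :
    False := by
  rw [mem_Iset_iff] at hjω hkω
  set s := 1 - ω with hs
  have hj0 : (0:ℝ) < 2^j := by positivity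
  have e1 : (2:ℝ)^j * s = 2^j - 2^j * ω := by rw [hs]; ring
  have e2 : (2:ℝ)^k * s = 2^k - 2^k * ω := by rw [hs]; ring
  have ha : (1:ℝ) < 2^j * s := by linarith [hjω.2]
  have hb : (2:ℝ)^k * s ≤ 2 := by linarith [hkω.1]
  have hs0 : 0 < s := by nlinarith
  have hk' : (2:ℝ) * 2^j ≤ 2^k := by
    have := pow_le_pow_right₀ (one_le_two (α := ℝ)) h
    calc (2:ℝ) * 2^j = 2^(j+1) := by rw [pow_succ]; ring
    _ ≤ 2^k := this
  nlinarith [mul_nonneg (sub_nonneg.mpr hk') hs0.le]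

lemma Iset_unique {j k : ℕ} {ω : ℝ} (hjω : ω ∈ Iset j) (hkω : ω ∈ Iset k) : j = k := by
  rcases lt_trichotomy j k with h | h | h
  · exact absurd (Iset_aux h hjω hkω) id
  · exact h
  · exact absurd (Iset_aux h hkω hjω) id

lemma int_eq_zero_of_mem {ω : ℝ} (hω : ω ∈ Set.Ico (0:ℝ) 1) {n : ℤ}
    (h : ω + n ∈ Set.Ico (0:ℝ) 1) : n = 0 := by
  obtain ⟨h1, h2⟩ := h
  obtain ⟨h3, h4⟩ := hω
  have ha : (-1 : ℝ) < (n:ℝ) := by linarith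
  have hb : (n:ℝ) < 1 := by linarith
  have ha' : (-1 : ℤ) < n := by exact_mod_cast ha
  have hb' : n < 1 := by exact_mod_cast hb
  omega

lemma mem_Omeg_iff {ω : ℝ} (hω : ω ∈ Set.Ico (0:ℝ) 1) {j : ℕ} (hj : 1 ≤ j)
    (hωj : ω ∈ Iset j) (n : ℤ) :
    ω + n ∈ Omeg ↔ n = 0 ∨ n = 2 * j + 1 := by
  constructor
  · intro h
    rcases h with h | h
    · exact Or.inl (int_eq_zero_of_mem hω h)
    · simp only [Set.mem_iUnion, Set.mem_image, Set.mem_Ici] at h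
      obtain ⟨k, hk, x, hx, hxe⟩ := h
      have hx01 := Iset_subset hk hx
      have hxval : x = ω + ((n - (2 * k + 1) : ℤ) : ℝ) := by push_cast; linarith
      have hn : (n - (2 * k + 1) : ℤ) = 0 := by
        apply int_eq_zero_of_mem hω
        rw [← hxval]; exact hx01
      have hxω : x = ω := by rw [hxval, hn]; push_cast; ring
      rw [hxω] at hx
      have := Iset_unique hωj hx
      right; omega
  · rintro (rfl | rfl)
    · left; simpa using hω
    · right
      simp only [Set.mem_iUnion, Set.mem_image, Set.mem_Ici]
      exact ⟨j, hj, ω, hωj, by push_cast; ring⟩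

/-- `Ω = [0,1) ∪ ⋃_{j≥1} (I_j + 2j + 1)` multi-tiles `ℝ` at level `2` by translations on `ℤ`
and is `(2,1)`-admissible for `ℤ`: for a.e. `ω ∈ [0,1)`, `∑_{n ∈ ℤ} χ_Ω(ω + n) = 2` and the
two elements of `Λ_ω = {m ∈ ℤ : ω + m ∈ Ω}` are distinct modulo `2`. -/
theorem Omeg_two_tiles_and_admissible :
    ∀ᵐ ω ∂(volume.restrict (Set.Ico (0 : ℝ) 1)),
      ((∑' n : ℤ, Omeg.indicator (fun _ => (1 : ℝ)) (ω + n)) = 2) ∧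
      (∀ a b : ℤ, ω + (a : ℝ) ∈ Omeg → ω + (b : ℝ) ∈ Omeg →
        a ≡ b [ZMOD (2 : ℤ)] → a = b) := by
  rw [ae_restrict_iff' measurableSet_Ico]
  filter_upwards with ω hω
  obtain ⟨j, hj, hωj⟩ := exists_Iset hω
  have hmem := mem_Omeg_iff hω hj hωj
  constructor
  · have hne : (0 : ℤ) ≠ 2 * j + 1 := by omega
    rw [tsum_eq_sum (s := ({0, 2 * (j:ℤ) + 1} : Finset ℤ))
      (by
        intro b hb
        simp only [Finset.mem_insert, Finset.mem_singleton, not_or] at hb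
        rw [Set.indicator_of_notMem]
        rw [hmem b]
        tauto)]
    rw [Finset.sum_pair hne]
    have m1 : ω + ((0:ℤ):ℝ) ∈ Omeg := (hmem 0).mpr (Or.inl rfl)
    have m2 : ω + ((2*(j:ℤ)+1 : ℤ):ℝ) ∈ Omeg := (hmem _).mpr (Or.inr rfl)
    rw [Set.indicator_of_mem m1, Set.indicator_of_mem m2]
    norm_num
  · intro a b ha hb hab
    rw [hmem] at ha hb
    have : (2 : ℤ) ∣ (b - a) := (Int.ModEq.dvd hab)
    rcases ha with rfl | rfl <;> rcases hb with rfl | rfl <;> omega
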